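/- arXiv:1812.10324 — 4 statements merged into one kernel-verified Lean document; each statement's English description precedes it below -/
import Mathlib

section
/- For an odd prime p, define Ψ(x) as the truncated series ∑_{k=0}^{(p-1)/2} (5/4)_k (1/2)_k ((1-ix)/2)_k ((1+ix)/2)_k ((1-x)/2)_k ((1+x)/2)_k / ((1/4)_k (1+ix/2)_k (1-ix/2)_k (1+x/2)_k (1-x/2)_k) · (-1)^k / k!. Then Ψ(x), viewed as a rational function of x, is a power series in x^4 with coefficients in ℤ_p (i.e., Ψ(x) = ∑_{n≥0} a_n x^{4n} with a_n ∈ ℤ_p). -/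
/-!
Pairing the Pochhammer symbols, `((1-ix)/2)_k ((1+ix)/2)_k ((1-x)/2)_k ((1+x)/2)_k` is
`16^{-k} ∏_{j<k} ((2j+1)⁴ - x⁴)`, and the four symbols of the denominator give the same with
`2j+2` in place of `2j+1`; moreover `(5/4)_k / (1/4)_k = 4k+1` and `(1/2)_k / k! = C(2k,k) / 4^k`.
Hence `Ψ(x) = ∑_k (-1)^k (4k+1) C(2k,k) 4^{-k} ∏_{j<k} ((2j+1)⁴ - x⁴) / ((2j+2)⁴ - x⁴)`.
For `k ≤ (p-1)/2` the numbers `4` and `2j+2 ≤ p-1` are `p`-adic units, so this rational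
function of `y = x⁴` is a power series in `ℤ_p⟦y⟧`, and evaluating it at `y = x⁴` with `|x| < 1`
converges to `Ψ(x)`.
-/

open Finset

/-- Pochhammer symbol `(x)_k = x(x+1)⋯(x+k-1)`, `(x)_0 = 1`. -/
noncomputable def poch {K : Type*} [Field K] (x : K) (k : ℕ) : K :=
  ∏ j ∈ Finset.range k, (x + j)

/-- The truncated series
`Ψ(x) = ∑_{k=0}^{(p-1)/2} (5/4)_k (1/2)_k ((1-ix)/2)_k ((1+ix)/2)_k ((1-x)/2)_k ((1+x)/2)_k
  / ((1/4)_k (1+ix/2)_k (1-ix/2)_k (1+x/2)_k (1-x/2)_k) · (-1)^k/k!`,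
in a field `K` containing a square root `i` of `-1`. -/
noncomputable def psiFun (p : ℕ) {K : Type*} [Field K] (i : K) (x : K) : K :=
  ∑ k ∈ Finset.range ((p - 1) / 2 + 1),
    poch ((5 : K) / 4) k * poch (1 / 2) k * poch ((1 - i * x) / 2) k *
        poch ((1 + i * x) / 2) k * poch ((1 - x) / 2) k * poch ((1 + x) / 2) k /
      (poch (1 / 4) k * poch (1 + i * x / 2) k * poch (1 - i * x / 2) k *
        poch (1 + x / 2) k * poch (1 - x / 2) k) * (-1) ^ k / (k.factorial : K)

open scoped Ring

theorem map_ringInverse {M₀ N₀ F : Type*} [MonoidWithZero M₀] [MonoidWithZero N₀]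
    [FunLike F M₀ N₀] [MonoidHomClass F M₀ N₀] (f : F) {a : M₀} (ha : IsUnit a) :
    f a⁻¹ʳ = (f a)⁻¹ʳ := by
  obtain ⟨u, rfl⟩ := ha
  rw [Ring.inverse_unit, show f u = (Units.map (f : M₀ →* N₀) u : N₀) from rfl,
    Ring.inverse_unit, ← map_inv]
  rfl

/-- `Ψ` as a function of `y = x⁴`, over any commutative ring. `Ring.inverse` is `0` on
non-units, so this is the intended expression only when `4` and the `(2j+2)⁴ - y` are units. -/
noncomputable def psiQuartic {R : Type*} [CommRing R] (n : ℕ) (y : R) : R :=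
  ∑ k ∈ range (n + 1), (-1) ^ k * (4 * k + 1) * k.centralBinom * (4 : R)⁻¹ʳ ^ k *
    ∏ j ∈ range k, ((2 * j + 1) ^ 4 - y) * ((2 * j + 2) ^ 4 - y)⁻¹ʳ

theorem map_psiQuartic {R S : Type*} [CommRing R] [CommRing S] (f : R →+* S) {n : ℕ} {y : R}
    (h4 : IsUnit (4 : R)) (hy : ∀ j < n, IsUnit ((2 * j + 2 : R) ^ 4 - y)) :
    f (psiQuartic n y) = psiQuartic n (f y) := by
  simp only [psiQuartic, map_sum, map_mul, map_pow, map_prod, map_ringInverse f h4]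
  refine sum_congr rfl fun k hk => congr_arg₂ _ (by simp [map_ofNat]) <|
    prod_congr rfl fun j hj => ?_
  rw [map_ringInverse f (hy j (by grind))]
  simp [map_ofNat]

section poch

variable {K : Type*} [Field K]

theorem poch_succ (x : K) (k : ℕ) : poch x (k + 1) = poch x k * (x + k) :=
  prod_range_succ _ _

theorem mul_poch_add_one (x : K) (k : ℕ) : x * poch (x + 1) k = poch x k * (x + k) := by
  induction k with
  | zero => simp [poch]
  | succ k ih =>
    rw [poch_succ, poch_succ, ← mul_assoc, ih]
    push_cast
    ring

variable [CharZero K]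

theorem poch_quartic {i : K} (hi : i ^ 2 = -1) (c x : K) (k : ℕ) :
    poch ((c - i * x) / 2) k * poch ((c + i * x) / 2) k * poch ((c - x) / 2) k *
        poch ((c + x) / 2) k * 16 ^ k = ∏ j ∈ range k, ((2 * j + c) ^ 4 - x ^ 4) := by
  induction k with
  | zero => simp [poch]
  | succ k ih =>
    rw [poch_succ, poch_succ, poch_succ, poch_succ, prod_range_succ, pow_succ]
    linear_combination ((c - i * x) / 2 + k) * ((c + i * x) / 2 + k) * ((c - x) / 2 + k) *
        ((c + x) / 2 + k) * 16 * ih -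
      (∏ j ∈ range k, ((2 * j + c) ^ 4 - x ^ 4)) * x ^ 2 * ((2 * k + c) ^ 2 - x ^ 2) * hi

theorem poch_ratCast_ne_zero {q : ℚ} (hq : 0 < q) (k : ℕ) : poch (q : K) k ≠ 0 :=
  prod_ne_zero_iff.mpr fun j _ => by exact_mod_cast (by positivity : q + j ≠ 0)

theorem poch_half_mul_four_pow (k : ℕ) :
    poch (1 / 2 : K) k * 4 ^ k = k.centralBinom * k.factorial := by
  induction k with
  | zero => simp [poch]
  | succ k ih =>
    have h : ((k + 1 : ℕ) : K) * (k + 1).centralBinom = 2 * (2 * k + 1) * k.centralBinom := by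
      exact_mod_cast Nat.succ_mul_centralBinom_succ k
    rw [poch_succ, pow_succ, Nat.factorial_succ]
    push_cast at h ⊢
    linear_combination 4 * ((1 : K) / 2 + k) * ih - k.factorial * h

end poch

theorem psiFun_eq_psiQuartic {K : Type*} [Field K] [CharZero K] (p : ℕ) {i : K}
    (hi : i ^ 2 = -1) (x : K) : psiFun p i x = psiQuartic ((p - 1) / 2) (x ^ 4) := by
  refine sum_congr rfl fun k _ => ?_
  have hNum := poch_quartic hi 1 x k
  have hDen := poch_quartic hi 2 x k
  rw [show (2 - i * x) / 2 = 1 - i * x / 2 by ring, show (2 + i * x) / 2 = 1 + i * x / 2 by ring,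
    show (2 - x) / 2 = 1 - x / 2 by ring, show (2 + x) / 2 = 1 + x / 2 by ring] at hDen
  have hFiveQuarters : poch (5 / 4 : K) k = poch (1 / 4) k * (4 * k + 1) := by
    rw [show (5 / 4 : K) = 1 / 4 + 1 by norm_num]
    linear_combination 4 * mul_poch_add_one (1 / 4 : K) k
  have hQuarter : poch (1 / 4 : K) k ≠ 0 := by
    simpa using poch_ratCast_ne_zero (K := K) (q := 1 / 4) (by norm_num) k
  have hf : (k.factorial : K) ≠ 0 := by exact_mod_cast k.factorial_ne_zero
  have hCentralBinom : (k.centralBinom : K) = poch (1 / 2) k * 4 ^ k / k.factorial :=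
    eq_div_of_mul_eq hf (poch_half_mul_four_pow k).symm
  simp only [Ring.inverse_eq_inv', prod_mul_distrib, prod_inv_distrib]
  rw [← hNum, ← hDen, hFiveQuarters, hCentralBinom]
  generalize poch (1 / 4 : K) k = P at hQuarter ⊢
  generalize poch (1 - i * x / 2 : K) k = b₁, poch (1 + i * x / 2 : K) k = b₂,
    poch (1 - x / 2 : K) k = b₃, poch (1 + x / 2 : K) k = b₄
  rw [show P * b₂ * b₁ * b₄ * b₃ = P * (b₁ * b₂ * b₃ * b₄) by ring]
  -- the denominator may vanish, so its inverse is kept as an opaque factor on both sides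
  generalize b₁ * b₂ * b₃ * b₄ = B
  simp only [div_eq_mul_inv, mul_inv, inv_pow]
  generalize B⁻¹ = c
  field_simp

theorem isLinearTopology_of_norm_le_one {R : Type*} [SeminormedCommRing R] [IsUltrametricDist R]
    (hR : ∀ r : R, ‖r‖ ≤ 1) : IsLinearTopology R R := by
  let ballIdeal (ε : ℝ) (hε : 0 < ε) : Ideal R :=
    { carrier := Metric.ball 0 ε
      add_mem' := fun {a b} ha hb => by
        simp only [mem_ball_zero_iff] at ha hb ⊢
        exact (IsUltrametricDist.norm_add_le_max a b).trans_lt (max_lt ha hb)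
      zero_mem' := Metric.mem_ball_self hε
      smul_mem' := fun r m hm => by
        simp only [mem_ball_zero_iff, smul_eq_mul] at hm ⊢
        exact (norm_mul_le r m).trans_lt
          ((mul_le_of_le_one_left (norm_nonneg m) (hR r)).trans_lt hm) }
  exact isLinearTopology_iff_hasBasis_submodule.mpr <| Metric.nhds_basis_ball.to_hasBasis
    (fun ε hε => ⟨ballIdeal ε hε, Metric.ball_mem_nhds 0 hε, subset_rfl⟩)
    fun _ hN => Metric.mem_nhds_iff.mp hN

namespace PadicInt

variable {p : ℕ} [Fact p.Prime]

instance : IsLinearTopology ℤ_[p] ℤ_[p] := isLinearTopology_of_norm_le_one norm_le_one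

theorem isUnit_natCast_of_coprime {n : ℕ} (hn : p.Coprime n) : IsUnit (n : ℤ_[p]) :=
  isUnit_iff.mpr (norm_natCast_eq_one_iff.mpr hn)

end PadicInt

section psiSeries

open PowerSeries

variable {p : ℕ} [Fact p.Prime]

variable (p) in
noncomputable def psiSeries : ℤ_[p]⟦X⟧ := psiQuartic ((p - 1) / 2) X

theorem map_aeval_psiSeries (hp : Odd p) {S : Type*} [CommRing S] (f : ℤ_[p] →+* S) {y : ℤ_[p]}
    (hy : HasEval y) : f (aeval hy (psiSeries p)) = psiQuartic ((p - 1) / 2) (f y) := by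
  have h4 : IsUnit (4 : ℤ_[p]⟦X⟧) := by
    have h := PadicInt.isUnit_natCast_of_coprime (p := p) ((Nat.coprime_two_right.mpr hp).pow_right 2)
    simpa [map_ofNat] using h.map (C : ℤ_[p] →+* ℤ_[p]⟦X⟧)
  have hden : ∀ j < (p - 1) / 2, IsUnit ((2 * j + 2 : ℤ_[p]⟦X⟧) ^ 4 - X) := by
    intro j hj
    have h := PadicInt.isUnit_natCast_of_coprime (p := p) (n := 2 * j + 2)
      (Nat.coprime_of_lt_prime (by omega) (by omega) Fact.out)
    rw [isUnit_iff_constantCoeff]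
    simpa [map_ofNat] using h.pow 4
  have h := map_psiQuartic (f.comp (aeval hy : ℤ_[p]⟦X⟧ →ₐ[ℤ_[p]] ℤ_[p]).toRingHom) h4 hden
  simpa [psiSeries, coe_aeval] using h

end psiSeries

/-- For an odd prime `p`, the rational function `Ψ(x)` is a power series in `x^4`
with coefficients in `ℤ_p`: there are `a_n ∈ ℤ_p` with
`Ψ(x) = ∑_{n≥0} a_n x^{4n}` (the series converging for `‖x‖ < 1`).
Here `K` is any normed field extension of `ℚ_p` containing `i` with `i^2 = -1`. -/
theorem psi_powerSeries_x4 (p : ℕ) [Fact p.Prime] (hp : Odd p)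
    (K : Type*) [NontriviallyNormedField K] [NormedAlgebra ℚ_[p] K]
    (i : K) (hi : i ^ 2 = -1) :
    ∃ a : ℕ → ℤ_[p], ∀ x : ℚ_[p], ‖x‖ < 1 →
      HasSum (fun n : ℕ => algebraMap ℚ_[p] K (((a n : ℚ_[p])) * x ^ (4 * n)))
        (psiFun p i (algebraMap ℚ_[p] K x)) := by
  have : CharZero K := charZero_of_injective_algebraMap (algebraMap ℚ_[p] K).injective
  refine ⟨fun n => PowerSeries.coeff n (psiSeries p), fun x hx => ?_⟩
  set z : ℤ_[p] := ⟨x, hx.le⟩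
  have hz : PowerSeries.HasEval (z ^ 4) := tendsto_pow_atTop_nhds_zero_of_norm_lt_one <| by
    rw [norm_pow]
    exact pow_lt_one₀ (norm_nonneg _) hx (by norm_num)
  let ι : ℤ_[p] →+* K := (algebraMap ℚ_[p] K).comp PadicInt.Coe.ringHom
  have hι : Continuous ι := (continuous_algebraMap ℚ_[p] K).comp continuous_subtype_val
  have hsum := (PowerSeries.hasSum_aeval hz (psiSeries p)).map ι hι
  rw [map_aeval_psiSeries hp ι hz] at hsum
  convert hsum using 1
  · ext n
    rw [pow_mul]
    rfl
  · rw [psiFun_eq_psiQuartic p hi, map_pow]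
    rfl
end

section
/- Let p be an odd prime and define Φ(x) as the (terminating) hypergeometric series ₆F₅ with upper parameters (5-p)/4, (1-p)/2, (1-ix)/2, (1+ix)/2, (1-x)/2, (1+x)/2 and lower parameters (1-p)/4, 1+(ix-p)/2, 1-(ix+p)/2, 1+(x-p)/2, 1-(x+p)/2, evaluated at -1. Then Φ(x) = 0 identically as a rational function of x. -/
/-!
Write `m = (p - 1) / 2`, `b = (1 - i x) / 2` and `d = (1 - x) / 2`. Then `Φ(x)` is the terminating
very-well-poised series with `a = -m` whose upper parameters `-m, b, 1 - b, d, 1 - d` are matched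
by the lower parameters `1 - u - m`. Under the reflection `k ↦ m - k` each ratio
`(u)_k / (1 - u - m)_k` picks up the sign `(-1)^m`, while the very-well-poised factor
`(1 - m/2)_k / (-m/2)_k = (m - 2k) / m` changes sign; together with `(-1)^k` the terms of
index `k` and `m - k` cancel, so the sum vanishes.
-/

open Finset

section Pochhammer

variable {K : Type*} [Field K]

theorem poch_add (a : K) (k n : ℕ) : poch a (k + n) = poch a k * poch (a + k) n := by
  simp only [poch, prod_range_add, Nat.cast_add, add_assoc]

theorem poch_eq_neg_one_pow_mul_poch (a : K) (n : ℕ) :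
    poch a n = (-1) ^ n * poch (1 - a - n) n := by
  have h : (-1 : K) ^ n = ∏ _j ∈ range n, (-1) := by simp
  rw [poch, poch, ← prod_range_reflect, h, ← prod_mul_distrib]
  refine prod_congr rfl fun j hj => ?_
  have hj : j < n := mem_range.1 hj
  rw [Nat.cast_sub (by omega), Nat.cast_sub (by omega)]
  push_cast
  ring

theorem poch_one (n : ℕ) : poch (1 : K) n = n.factorial := by
  induction n with
  | zero => simp [poch]
  | succ n ih => rw [poch, prod_range_succ, ← poch, ih, Nat.factorial_succ]; push_cast; ring

theorem poch_add_one_div_poch {t : K} (ht : t ≠ 0) {k : ℕ} (hk : poch t k ≠ 0) :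
    poch (t + 1) k / poch t k = (t + k) / t := by
  have h₁ : poch t (k + 1) = t * poch (t + 1) k := by rw [Nat.add_comm, poch_add]; simp [poch]
  have h₂ : poch t (k + 1) = poch t k * (t + k) := prod_range_succ _ _
  rw [div_eq_div_iff hk ht]
  linear_combination h₂ - h₁

variable {k n m : ℕ}

theorem neg_one_pow_mul_neg_one_pow_of_add_eq (h : k + n = m) :
    (-1 : K) ^ m * (-1) ^ k = (-1) ^ n := by
  rw [← h, pow_add, mul_right_comm, ← pow_add, Even.neg_one_pow ⟨k, rfl⟩, one_mul]

theorem poch_mul_poch_of_add_eq (h : k + n = m) {u v : K} (huv : u + v + m = 1) :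
    poch u k * poch v n = (-1) ^ n * poch u m := by
  have hv : 1 - v - n = u + k := by
    rw [← h, Nat.cast_add] at huv
    linear_combination -huv
  rw [poch_eq_neg_one_pow_mul_poch v, hv, ← h, poch_add]
  ring

theorem poch_div_poch_of_add_eq (h : k + n = m) {u v : K} (huv : u + v + m = 1)
    (hk : poch v k ≠ 0) (hn : poch v n ≠ 0) :
    poch u k / poch v k = (-1) ^ m * (poch u n / poch v n) := by
  rw [mul_div_assoc', div_eq_div_iff hk hn]
  linear_combination poch_mul_poch_of_add_eq h huv -
    (-1) ^ m * poch_mul_poch_of_add_eq ((add_comm n k).trans h) huv -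
    poch u m * neg_one_pow_mul_neg_one_pow_of_add_eq (K := K) h

end Pochhammer

theorem sum_range_eq_zero_of_eq_neg_reflect {M : Type*} [AddCommGroup M] [IsAddTorsionFree M]
    (f : ℕ → M) (m : ℕ) (h : ∀ k ≤ m, f k = -f (m - k)) : ∑ k ∈ range (m + 1), f k = 0 := by
  rw [← two_nsmul_eq_zero, two_nsmul]
  nth_rewrite 2 [← sum_range_reflect]
  rw [← sum_add_distrib]
  refine sum_eq_zero fun k hk => ?_
  rw [h k (by rw [mem_range] at hk; omega), add_tsub_cancel_right, neg_add_cancel]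

section VeryWellPoised

variable {K : Type*} [Field K] (m : ℕ) (b d : K)

noncomputable def veryWellPoisedDen (k : ℕ) : K :=
  poch (-(m : K) / 2) k * poch (1 - b - m) k * poch (b - m) k * poch (1 - d - m) k *
    poch (d - m) k

/-- The `k`-th term of the very-well-poised series
`₆F₅(a, 1 + a/2, b, c, d, e; a/2, 1 + a - b, 1 + a - c, 1 + a - d, 1 + a - e; -1)` at
`a = -m`, `c = 1 - b`, `e = 1 - d`. -/
noncomputable def veryWellPoisedTerm (k : ℕ) : K :=
  poch (-(m : K) / 2 + 1) k * poch (-(m : K)) k * poch b k * poch (1 - b) k * poch d k *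
    poch (1 - d) k / veryWellPoisedDen m b d k * (-1) ^ k / (k.factorial : K)

theorem veryWellPoisedTerm_eq (k : ℕ) :
    veryWellPoisedTerm m b d k =
      poch (-(m : K) / 2 + 1) k / poch (-(m : K) / 2) k * (-1) ^ k *
        (poch (-(m : K)) k / poch 1 k) * (poch b k / poch (1 - b - m) k) *
        (poch (1 - b) k / poch (b - m) k) * (poch d k / poch (1 - d - m) k) *
        (poch (1 - d) k / poch (d - m) k) := by
  rw [veryWellPoisedTerm, veryWellPoisedDen, poch_one]
  ring

variable {m} {k n : ℕ}

theorem veryWellPoisedTerm_eq_neg [CharZero K] (hm : m ≠ 0) (h : k + n = m)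
    (hk : veryWellPoisedDen m b d k ≠ 0) (hn : veryWellPoisedDen m b d n ≠ 0) :
    veryWellPoisedTerm m b d k = -veryWellPoisedTerm m b d n := by
  simp only [veryWellPoisedDen, mul_ne_zero_iff] at hk hn
  obtain ⟨⟨⟨⟨htk, hbk⟩, hb'k⟩, hdk⟩, hd'k⟩ := hk
  obtain ⟨⟨⟨⟨htn, hbn⟩, hb'n⟩, hdn⟩, hd'n⟩ := hn
  have hfac (j : ℕ) : poch (1 : K) j ≠ 0 := by rw [poch_one]; exact_mod_cast j.factorial_ne_zero
  have ht : -(m : K) / 2 ≠ 0 := by simpa using hm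
  have hmK : (m : K) = k + n := by rw [← h, Nat.cast_add]
  have hodd : -(m : K) / 2 + k = -(-(m : K) / 2 + n) := by rw [hmK]; ring
  have hsign : (-1 : K) ^ k * ((-1) ^ m) ^ 5 = (-1) ^ n := by
    rw [← neg_one_pow_mul_neg_one_pow_of_add_eq h, ← pow_mul, mul_comm,
      neg_one_pow_eq_pow_mod_two, neg_one_pow_eq_pow_mod_two (n := m)]
    congr 2
    omega
  rw [veryWellPoisedTerm_eq, veryWellPoisedTerm_eq, poch_add_one_div_poch ht htk,
    poch_add_one_div_poch ht htn, hodd,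
    poch_div_poch_of_add_eq h (by ring) (hfac k) (hfac n),
    poch_div_poch_of_add_eq h (by ring) hbk hbn,
    poch_div_poch_of_add_eq h (by ring) hb'k hb'n,
    poch_div_poch_of_add_eq h (by ring) hdk hdn,
    poch_div_poch_of_add_eq h (by ring) hd'k hd'n, ← hsign]
  ring

theorem sum_veryWellPoisedTerm_eq_zero [CharZero K] (hm : m ≠ 0)
    (hden : ∀ k ∈ range (m + 1), veryWellPoisedDen m b d k ≠ 0) :
    ∑ k ∈ range (m + 1), veryWellPoisedTerm m b d k = 0 :=
  sum_range_eq_zero_of_eq_neg_reflect _ m fun k hk =>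
    veryWellPoisedTerm_eq_neg b d hm (Nat.add_sub_cancel' hk)
      (hden k (mem_range.2 (Nat.lt_succ_of_le hk))) (hden _ (mem_range.2 (by omega)))

end VeryWellPoised

theorem phi_eq_zero_general (p : ℕ) [Fact p.Prime] (hp : Odd p)
    {K : Type*} [Field K] [CharZero K] (i : K) (x : K)
    (hden : ∀ k ∈ Finset.range ((p - 1) / 2 + 1),
      poch ((1 - (p : K)) / 4) k * poch (1 + (i * x - p) / 2) k *
        poch (1 - (i * x + p) / 2) k * poch (1 + (x - p) / 2) k *
        poch (1 - (x + p) / 2) k ≠ 0) :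
    ∑ k ∈ Finset.range ((p - 1) / 2 + 1),
      poch ((5 - (p : K)) / 4) k * poch ((1 - (p : K)) / 2) k * poch ((1 - i * x) / 2) k *
          poch ((1 + i * x) / 2) k * poch ((1 - x) / 2) k * poch ((1 + x) / 2) k /
        (poch ((1 - (p : K)) / 4) k * poch (1 + (i * x - p) / 2) k *
          poch (1 - (i * x + p) / 2) k * poch (1 + (x - p) / 2) k *
          poch (1 - (x + p) / 2) k) * (-1) ^ k / (k.factorial : K) = 0 := by
  obtain ⟨m, rfl⟩ := hp
  have hm : m ≠ 0 := by
    rintro rfl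
    exact Nat.not_prime_one Fact.out
  rw [show (2 * m + 1 - 1) / 2 = m by omega] at hden ⊢
  convert sum_veryWellPoisedTerm_eq_zero ((1 - i * x) / 2) ((1 - x) / 2) hm ?_ using 3
  · rw [veryWellPoisedTerm, veryWellPoisedDen]
    push_cast
    ring_nf
  · intro k hk
    have hk' := hden k hk
    rw [veryWellPoisedDen]
    push_cast at hk' ⊢
    ring_nf at hk' ⊢
    exact hk'

/-- Let `p` be an odd prime, `K` a field of characteristic zero with `i^2 = -1`.
The terminating `₆F₅` series `Φ(x)` with upper parameters
`(5-p)/4, (1-p)/2, (1-ix)/2, (1+ix)/2, (1-x)/2, (1+x)/2` and lower parameters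
`(1-p)/4, 1+(ix-p)/2, 1-(ix+p)/2, 1+(x-p)/2, 1-(x+p)/2`, at argument `-1`,
vanishes identically (the series terminates at `k = (p-1)/2` since
`((1-p)/2)_k = 0` for larger `k`).  We assume the lower-parameter Pochhammer
products are nonzero at each relevant `k` (i.e. `x` avoids the poles). -/
theorem phi_eq_zero (p : ℕ) [Fact p.Prime] (hp : Odd p)
    {K : Type*} [Field K] [CharZero K] (i : K) (hi : i ^ 2 = -1) (x : K)
    (hden : ∀ k ∈ Finset.range ((p - 1) / 2 + 1),
      poch ((1 - (p : K)) / 4) k * poch (1 + (i * x - p) / 2) k *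
        poch (1 - (i * x + p) / 2) k * poch (1 + (x - p) / 2) k *
        poch (1 - (x + p) / 2) k ≠ 0) :
    ∑ k ∈ Finset.range ((p - 1) / 2 + 1),
      poch ((5 - (p : K)) / 4) k * poch ((1 - (p : K)) / 2) k * poch ((1 - i * x) / 2) k *
          poch ((1 + i * x) / 2) k * poch ((1 - x) / 2) k * poch ((1 + x) / 2) k /
        (poch ((1 - (p : K)) / 4) k * poch (1 + (i * x - p) / 2) k *
          poch (1 - (i * x + p) / 2) k * poch (1 + (x - p) / 2) k *
          poch (1 - (x + p) / 2) k) * (-1) ^ k / (k.factorial : K) = 0 :=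
  phi_eq_zero_general p hp i x hden
end

section
/- For an odd prime p, Γ(1 + p/2)Γ(1 - p/2) / (Γ(3/2)Γ(1/2)) = (p/2) · Γ_p(1 + p/2)Γ_p(1 - p/2) / (Γ_p(3/2)Γ_p(1/2)), where Γ is the classical Gamma function (the left side being a rational number) and Γ_p is the p-adic Gamma function. -/
/-!
Both sides equal `(-1)^m p`, where `p = 2m + 1`.

Complex side: the reflection formula gives `Γ(1 + z)Γ(1 - z) = πz / sin(πz)`, and at `z = p/2`
and `z = 1/2` the sines are `(-1)^m` and `1`.

p-adic side: Gauss's generalization of Wilson's theorem (the units of `ℤ/p^k` multiply to `-1`)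
makes Morita's sequence `n ↦ (-1)^n ∏_{k < n, p ∤ k} k` 1-Lipschitz for the p-adic metric, so
`Γ_p` is its continuous extension and inherits `Γ_p(x + 1) = -x Γ_p(x)` for units `x` and
`Γ_p(x + 1) = -Γ_p(x)` for `x ∈ pℤ_p`. As `p/2 = 1/2 + m` and `1 - p/2 = 1/2 - m`, iterating
these expresses `Γ_p(p/2)` and `Γ_p(1/2)` through `Γ_p(1/2)` and `Γ_p(1 - p/2)` with the
products `(-1)^m ∏_{j<m} (1/2 + j)` and `∏_{j<m} (1/2 + j)`, which cancel up to `(-1)^m`.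
-/

open Finset

/-- Morita's p-adic Gamma function on `ℤ_p`: the continuous extension of
`n ↦ (-1)^n ∏_{1 ≤ k < n, p ∤ k} k` (the limit is taken along the integer
approximations `x.appr n → x`). -/
noncomputable def moritaGamma (p : ℕ) [Fact p.Prime] (x : ℤ_[p]) : ℤ_[p] :=
  Filter.limUnder Filter.atTop (fun n : ℕ =>
    ((-1 : ℤ_[p]) ^ (x.appr n) *
      ∏ k ∈ (Finset.range (x.appr n)).filter (fun k => ¬ p ∣ k), (k : ℤ_[p])))

namespace ZMod

variable {p : ℕ} [Fact p.Prime]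

theorem eq_one_or_eq_neg_one_of_sq_eq_one (hp : p ≠ 2) {k : ℕ} {x : ZMod (p ^ k)}
    (hx : x ^ 2 = 1) : x = 1 ∨ x = -1 := by
  obtain ⟨a, rfl⟩ := intCast_surjective x
  have hprime : Prime (p : ℤ) := Nat.prime_iff_prime_int.mp Fact.out
  have hdvd : (p : ℤ) ^ k ∣ (a - 1) * (a + 1) := by
    have := (intCast_zmod_eq_zero_iff_dvd ((a - 1) * (a + 1)) (p ^ k)).1
      (by push_cast; linear_combination hx)
    exact_mod_cast this
  have hboth : ¬ ((p : ℤ) ∣ a - 1 ∧ (p : ℤ) ∣ a + 1) := fun ⟨h₁, h₂⟩ => by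
    have : (p : ℤ) ∣ 2 := by simpa using dvd_sub h₂ h₁
    exact hp ((Nat.prime_dvd_prime_iff_eq Fact.out Nat.prime_two).1 (by exact_mod_cast this))
  by_cases h : (p : ℤ) ∣ a - 1
  · left
    have := hprime.pow_dvd_of_dvd_mul_right k (fun h' => hboth ⟨h, h'⟩) hdvd
    rw [← sub_eq_zero, ← Int.cast_one, ← Int.cast_sub, intCast_zmod_eq_zero_iff_dvd]
    exact_mod_cast this
  · right
    have := hprime.pow_dvd_of_dvd_mul_left k h hdvd
    rw [← sub_eq_zero, sub_neg_eq_add, ← Int.cast_one, ← Int.cast_add,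
      intCast_zmod_eq_zero_iff_dvd]
    exact_mod_cast this

theorem units_inv_eq_self_iff (hp : p ≠ 2) {k : ℕ} (u : (ZMod (p ^ k))ˣ) :
    u⁻¹ = u ↔ u = 1 ∨ u = -1 := by
  refine ⟨fun h => ?_, by rintro (rfl | rfl) <;> simp⟩
  have hsq : (u : ZMod (p ^ k)) ^ 2 = 1 := by
    calc (u : ZMod (p ^ k)) ^ 2 = ↑(u⁻¹ * u) := by rw [h, sq, Units.val_mul]
      _ = 1 := by rw [inv_mul_cancel, Units.val_one]
  rcases eq_one_or_eq_neg_one_of_sq_eq_one hp hsq with h₁ | h₁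
  · exact Or.inl (Units.ext h₁)
  · exact Or.inr (Units.ext h₁)

theorem prod_units_prime_pow_eq_neg_one (hp : p ≠ 2) (k : ℕ) :
    ∏ u : (ZMod (p ^ k))ˣ, u = -1 := by
  classical
  have : ∏ u ∈ univ.erase (-1 : (ZMod (p ^ k))ˣ), u = 1 :=
    prod_involution (fun u _ => u⁻¹) (by simp)
      (fun u => by simp +contextual [units_inv_eq_self_iff hp])
      (fun u => by simp [@inv_eq_iff_eq_inv _ _ u]) (by simp)
  rw [← insert_erase (mem_univ (-1 : (ZMod (p ^ k))ˣ)), prod_insert (notMem_erase _ _), this,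
    mul_one]

theorem prod_range_filter_not_dvd_eq_neg_one (hp : p ≠ 2) {k : ℕ} (hk : k ≠ 0) :
    ∏ x ∈ (range (p ^ k)).filter (fun x => ¬ p ∣ x), (x : ZMod (p ^ k)) = -1 := by
  have hcop {x : ℕ} : x.Coprime (p ^ k) ↔ ¬ p ∣ x := by
    rw [Nat.coprime_pow_right_iff (Nat.pos_of_ne_zero hk), Nat.coprime_comm,
      Nat.Prime.coprime_iff_not_dvd Fact.out]
  have := congrArg Units.val (prod_units_prime_pow_eq_neg_one hp k)
  rw [Units.coe_prod, Units.val_neg, Units.val_one] at this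
  rw [← this]
  refine prod_bij' (fun x hx => unitOfCoprime x (hcop.2 (mem_filter.1 hx).2))
    (fun u _ => (u : ZMod (p ^ k)).val) (by simp) (fun u _ => ?_) (fun x hx => ?_)
    (fun u _ => ?_) (fun x hx => rfl)
  · have : NeZero (p ^ k) := ⟨pow_ne_zero k (Fact.out : p.Prime).ne_zero⟩
    exact mem_filter.2 ⟨mem_range.2 (val_lt _), hcop.1 (val_coe_unit_coprime u)⟩
  · rw [coe_unitOfCoprime, val_cast_of_lt (mem_range.1 (mem_filter.1 hx).1)]
  · exact Units.ext (by simp)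

end ZMod

def moritaSeq (p n : ℕ) : ℤ := (-1) ^ n * ∏ k ∈ (range n).filter (fun k => ¬ p ∣ k), (k : ℤ)

section MoritaSeq

variable {p : ℕ}

theorem moritaSeq_succ (n : ℕ) :
    moritaSeq p (n + 1) = -(if p ∣ n then 1 else (n : ℤ)) * moritaSeq p n := by
  simp only [moritaSeq, prod_filter, prod_range_succ, pow_succ]
  split_ifs <;> ring

variable [Fact p.Prime]

theorem moritaSeq_cast_pow (hp : p ≠ 2) (k : ℕ) : (moritaSeq p (p ^ k) : ZMod (p ^ k)) = 1 := by
  rcases eq_or_ne k 0 with rfl | hk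
  · exact Subsingleton.elim (α := ZMod 1) _ _
  have hodd : Odd (p ^ k) := ((Fact.out : p.Prime).odd_of_ne_two hp).pow
  rw [moritaSeq]
  push_cast
  rw [hodd.neg_one_pow, ZMod.prod_range_filter_not_dvd_eq_neg_one hp hk, neg_one_mul, neg_neg]

theorem moritaSeq_cast_add_pow (hp : p ≠ 2) (k n : ℕ) :
    (moritaSeq p (n + p ^ k) : ZMod (p ^ k)) = moritaSeq p n := by
  rcases eq_or_ne k 0 with rfl | hk
  · exact Subsingleton.elim (α := ZMod 1) _ _
  induction n with
  | zero => rw [zero_add, moritaSeq_cast_pow hp]; simp [moritaSeq]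
  | succ n ih =>
    have hdvd : p ∣ n + p ^ k ↔ p ∣ n := Nat.dvd_add_left (dvd_pow_self p hk)
    rw [add_right_comm, moritaSeq_succ, moritaSeq_succ, Int.cast_mul, ih, Int.cast_mul,
      if_congr hdvd rfl rfl]
    push_cast
    rw [← Nat.cast_pow, ZMod.natCast_self, add_zero]

theorem moritaSeq_cast_add_pow_mul (hp : p ≠ 2) (k n c : ℕ) :
    (moritaSeq p (n + p ^ k * c) : ZMod (p ^ k)) = moritaSeq p n := by
  induction c with
  | zero => rw [mul_zero, add_zero]
  | succ c ih => rw [mul_add_one, ← add_assoc, moritaSeq_cast_add_pow hp, ih]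

theorem moritaSeq_cast_congr (hp : p ≠ 2) {k a b : ℕ} (h : (a : ZMod (p ^ k)) = b) :
    (moritaSeq p a : ZMod (p ^ k)) = moritaSeq p b := by
  rw [← Nat.mod_add_div a (p ^ k), ← Nat.mod_add_div b (p ^ k), moritaSeq_cast_add_pow_mul hp,
    moritaSeq_cast_add_pow_mul hp, (ZMod.natCast_eq_natCast_iff' _ _ _).1 h]

end MoritaSeq

namespace PadicInt

open Filter Topology

variable {p : ℕ} [Fact p.Prime]

theorem tendsto_appr (x : ℤ_[p]) : Tendsto (fun n => (x.appr n : ℤ_[p])) atTop (𝓝 x) := by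
  rw [tendsto_iff_norm_sub_tendsto_zero]
  refine squeeze_zero (g := fun n : ℕ => (p : ℝ) ^ (-n : ℤ)) (fun _ => norm_nonneg _)
    (fun n => ?_) ?_
  · rw [norm_sub_rev, norm_le_pow_iff_mem_span_pow]
    exact appr_spec n x
  · simp only [zpow_neg, zpow_natCast, ← inv_pow]
    exact tendsto_pow_atTop_nhds_zero_of_lt_one (by positivity)
      (inv_lt_one_of_one_lt₀ (by exact_mod_cast (Fact.out : p.Prime).one_lt))

theorem dvd_appr_iff_norm_lt_one (x : ℤ_[p]) {n : ℕ} (hn : n ≠ 0) :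
    p ∣ x.appr n ↔ ‖x‖ < 1 := by
  have h : (p : ℤ_[p]) ∣ x - x.appr n :=
    (dvd_pow_self _ hn).trans (Ideal.mem_span_singleton.1 (appr_spec n x))
  rw [norm_lt_one_iff_dvd, dvd_iff_dvd_of_dvd_sub h, ← norm_lt_one_iff_dvd,
    norm_natCast_lt_one_iff]

theorem norm_two (hp : p ≠ 2) : ‖(2 : ℤ_[p])‖ = 1 := by
  rw [← Nat.cast_ofNat, norm_natCast_eq_one_iff]
  exact (Nat.coprime_primes Fact.out Nat.prime_two).2 hp

theorem norm_add_intCast_of_two_mul_eq_one (hp : p ≠ 2) {t : ℤ_[p]} (ht : 2 * t = 1) {i : ℤ}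
    (hi : |2 * i + 1| < p) : ‖t + i‖ = 1 := by
  have hodd : ¬ (p : ℤ) ∣ 2 * i + 1 := fun h => by
    have := Int.eq_zero_of_abs_lt_dvd h hi
    omega
  have h2 : 2 * (t + i) = ((2 * i + 1 : ℤ) : ℤ_[p]) := by push_cast; linear_combination ht
  have := (norm_le_one _).eq_of_not_lt (mt (norm_int_lt_one_iff_dvd _).1 hodd)
  rwa [← h2, norm_mul, norm_two hp, one_mul] at this

end PadicInt

section MoritaGamma

open PadicInt Filter Topology

variable {p : ℕ} [Fact p.Prime]

theorem dist_moritaSeq_le (hp : p ≠ 2) (a b : ℕ) :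
    dist (moritaSeq p a : ℤ_[p]) (moritaSeq p b) ≤ dist (a : ℤ_[p]) b := by
  rcases eq_or_ne (a : ℤ_[p]) b with h | h
  · rw [Nat.cast_injective h, dist_self, dist_self]
  rw [dist_eq_norm, dist_eq_norm]
  have hv := norm_eq_zpow_neg_valuation (sub_ne_zero.2 h)
  have hab := (norm_le_pow_iff_mem_span_pow _ _).1 hv.le
  rw [← ker_toZModPow, RingHom.mem_ker, map_sub, map_natCast, map_natCast, sub_eq_zero] at hab
  rw [hv, norm_le_pow_iff_mem_span_pow, ← ker_toZModPow, RingHom.mem_ker, map_sub, map_intCast,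
    map_intCast, sub_eq_zero]
  exact moritaSeq_cast_congr hp hab

theorem norm_moritaSeq (n : ℕ) : ‖(moritaSeq p n : ℤ_[p])‖ = 1 := by
  rw [moritaSeq]
  push_cast
  rw [norm_mul, norm_pow, norm_neg, norm_one, one_pow, one_mul, norm_prod]
  exact prod_eq_one fun k hk => norm_natCast_eq_one_iff.2
    ((Nat.Prime.coprime_iff_not_dvd Fact.out).2 (mem_filter.1 hk).2)

theorem cauchySeq_moritaSeq (hp : p ≠ 2) {a : ℕ → ℕ} (ha : CauchySeq fun n => (a n : ℤ_[p])) :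
    CauchySeq fun n => (moritaSeq p (a n) : ℤ_[p]) :=
  Metric.cauchySeq_iff.2 fun ε hε => (Metric.cauchySeq_iff.1 ha ε hε).imp fun _ hN m hm n hn =>
    (dist_moritaSeq_le hp _ _).trans_lt (hN m hm n hn)

theorem tendsto_moritaSeq_moritaGamma (hp : p ≠ 2) {a : ℕ → ℕ} {x : ℤ_[p]}
    (ha : Tendsto (fun n => (a n : ℤ_[p])) atTop (𝓝 x)) :
    Tendsto (fun n => (moritaSeq p (a n) : ℤ_[p])) atTop (𝓝 (moritaGamma p x)) := by
  obtain ⟨L, hL⟩ :=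
    cauchySeq_tendsto_of_complete (cauchySeq_moritaSeq hp (tendsto_appr x).cauchySeq)
  have hΓ : moritaGamma p x = L := by
    rw [moritaGamma, ← hL.limUnder_eq]
    simp [moritaSeq]
  rw [hΓ]
  refine tendsto_of_tendsto_of_dist hL
    (squeeze_zero (fun _ => dist_nonneg) (fun n => dist_moritaSeq_le hp _ _) ?_)
  simpa using (tendsto_appr x).dist ha

theorem norm_moritaGamma (hp : p ≠ 2) (x : ℤ_[p]) : ‖moritaGamma p x‖ = 1 :=
  tendsto_nhds_unique (tendsto_moritaSeq_moritaGamma hp (tendsto_appr x)).norm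
    (by simpa only [norm_moritaSeq] using tendsto_const_nhds)

theorem moritaGamma_add_one (hp : p ≠ 2) (x : ℤ_[p]) :
    moritaGamma p (x + 1) = -(if ‖x‖ < 1 then 1 else x) * moritaGamma p x := by
  have hsucc : Tendsto (fun n => ((x.appr n + 1 : ℕ) : ℤ_[p])) atTop (𝓝 (x + 1)) := by
    simpa using (tendsto_appr x).add_const 1
  have hfactor : Tendsto (fun n => if p ∣ x.appr n then 1 else (x.appr n : ℤ_[p]))
      atTop (𝓝 (if ‖x‖ < 1 then 1 else x)) := by
    have hdvd := (eventually_ne_atTop 0).mono fun n hn => dvd_appr_iff_norm_lt_one x hn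
    split_ifs with hx
    · exact tendsto_const_nhds.congr' (hdvd.mono fun n h => by simp [h.2 hx])
    · exact (tendsto_appr x).congr' (hdvd.mono fun n h => by simp [mt h.1 hx])
  refine tendsto_nhds_unique (tendsto_moritaSeq_moritaGamma hp hsucc)
    ((hfactor.neg.mul (tendsto_moritaSeq_moritaGamma hp (tendsto_appr x))).congr fun n => ?_)
  rw [moritaSeq_succ, Int.cast_mul, Int.cast_neg, Int.cast_ite, Int.cast_one, Int.cast_natCast]

theorem moritaGamma_add_one_of_norm_lt_one (hp : p ≠ 2) {x : ℤ_[p]} (hx : ‖x‖ < 1) :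
    moritaGamma p (x + 1) = -moritaGamma p x := by
  rw [moritaGamma_add_one hp, if_pos hx, neg_one_mul]

theorem moritaGamma_add_one_of_norm_eq_one (hp : p ≠ 2) {x : ℤ_[p]} (hx : ‖x‖ = 1) :
    moritaGamma p (x + 1) = -x * moritaGamma p x := by
  rw [moritaGamma_add_one hp, if_neg hx.not_lt]

theorem moritaGamma_add_nat (hp : p ≠ 2) (x : ℤ_[p]) (m : ℕ) (h : ∀ j < m, ‖x + j‖ = 1) :
    moritaGamma p (x + m) = (∏ j ∈ range m, -(x + j)) * moritaGamma p x := by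
  induction m with
  | zero => simp
  | succ m ih =>
    rw [Nat.cast_succ, ← add_assoc, moritaGamma_add_one_of_norm_eq_one hp (h m m.lt_succ_self),
      ih fun j hj => h j (hj.trans m.lt_succ_self), prod_range_succ]
    ring

theorem moritaGamma_one_add_mul_one_sub_of_two_mul_eq_one {m : ℕ} (hm : p = 2 * m + 1)
    {t : ℤ_[p]} (ht : 2 * t = 1) :
    moritaGamma p (1 + p * t) * moritaGamma p (1 - p * t) * t =
      (-1) ^ m * (moritaGamma p (1 + t) * moritaGamma p t) := by
  have hp : p ≠ 2 := by omega
  have hm0 : 0 < m := by have := (Fact.out : p.Prime).two_le; omega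
  have hnorm (i : ℤ) (hi₁ : -m ≤ i) (hi₂ : i < m) : ‖t + i‖ = 1 :=
    norm_add_intCast_of_two_mul_eq_one hp ht (abs_lt.2 ⟨by omega, by omega⟩)
  have hpt : (p : ℤ_[p]) * t = t + m := by
    have hpm : (p : ℤ_[p]) = 2 * m + 1 := by exact_mod_cast hm
    rw [hpm]
    linear_combination (m : ℤ_[p]) * ht
  have hu : 1 - (p : ℤ_[p]) * t = t - m := by
    rw [hpt]
    linear_combination -ht
  have hΓpt : moritaGamma p (p * t) = (∏ j ∈ range m, -(t + j)) * moritaGamma p t := by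
    rw [hpt]
    refine moritaGamma_add_nat hp t m fun j hj => ?_
    simpa using hnorm j (by omega) (by omega)
  have hΓt : moritaGamma p t = (∏ j ∈ range m, -(t - m + j)) * moritaGamma p (t - m) := by
    simpa using moritaGamma_add_nat hp (t - m) m fun j hj => by
      simpa [sub_add_eq_add_sub, add_sub_assoc] using hnorm (j - m) (by omega) (by omega)
  have hrefl : ∏ j ∈ range m, -(t - m + j) = ∏ j ∈ range m, (t + j) := by
    rw [← prod_range_reflect (fun j : ℕ => t + j)]
    refine prod_congr rfl fun j hj => ?_
    rw [Nat.sub_sub, Nat.cast_sub (by simp at hj; omega)]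
    push_cast
    linear_combination -ht
  rw [hrefl] at hΓt
  rw [add_comm 1, moritaGamma_add_one_of_norm_lt_one hp
      ((norm_lt_one_iff_dvd _).2 (dvd_mul_right _ _)), hu, add_comm 1,
    moritaGamma_add_one_of_norm_eq_one hp (by simpa using hnorm 0 (by omega) (by omega)), hΓpt,
    prod_neg, card_range]
  linear_combination ((-1) ^ m * t * moritaGamma p t) * hΓt

end MoritaGamma

namespace Complex

open scoped Real

theorem Gamma_one_add_mul_Gamma_one_sub (z : ℂ) (hz : z ≠ 0) :
    Gamma (1 + z) * Gamma (1 - z) = z * π / sin (π * z) := by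
  rw [add_comm, Gamma_add_one z hz, mul_assoc, Gamma_mul_Gamma_one_sub, mul_div_assoc]

theorem sin_pi_mul_odd_div_two (m : ℕ) : sin (π * ((2 * m + 1) / 2)) = (-1) ^ m := by
  rw [show (π : ℂ) * ((2 * m + 1) / 2) = (m * π : ℝ) + π / 2 by push_cast; ring,
    sin_add_pi_div_two, ← ofReal_cos, Real.cos_nat_mul_pi]
  push_cast
  rfl

theorem Gamma_one_add_odd_div_two_mul_Gamma_one_sub (m : ℕ) :
    Gamma (1 + (2 * m + 1) / 2) * Gamma (1 - (2 * m + 1) / 2) =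
      (-1) ^ m * (2 * m + 1) * π / 2 := by
  have hodd : (2 * m + 1 : ℂ) ≠ 0 := by exact_mod_cast (2 * m).succ_ne_zero
  rw [Gamma_one_add_mul_Gamma_one_sub _ (div_ne_zero hodd two_ne_zero), sin_pi_mul_odd_div_two]
  rcases neg_one_pow_eq_or ℂ m with h | h <;> rw [h] <;> ring

theorem Gamma_one_add_odd_div_two_mul_Gamma_one_sub_div (m : ℕ) :
    Gamma (1 + (2 * m + 1) / 2) * Gamma (1 - (2 * m + 1) / 2) / (Gamma (3 / 2) * Gamma (1 / 2)) =
      (-1) ^ m * (2 * m + 1) := by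
  have hhalf := Gamma_one_add_odd_div_two_mul_Gamma_one_sub 0
  norm_num at hhalf
  have hπ : (π : ℂ) ≠ 0 := ofReal_ne_zero.2 Real.pi_ne_zero
  rw [hhalf, Gamma_one_add_odd_div_two_mul_Gamma_one_sub]
  field_simp

end Complex

/-- For an odd prime `p`, the (rational) number
`Γ(1 + p/2)Γ(1 - p/2)/(Γ(3/2)Γ(1/2))` equals
`(p/2) · Γ_p(1 + p/2)Γ_p(1 - p/2)/(Γ_p(3/2)Γ_p(1/2))`:
there is a single rational `q` realizing both sides (the first in `ℂ`, the
second in `ℚ_p`).  Here `t ∈ ℤ_p` is the element `1/2`, so `3/2 = 1 + t`. -/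
theorem gamma_vs_padicGamma (p : ℕ) [Fact p.Prime] (hp : Odd p)
    (t : ℤ_[p]) (ht : 2 * t = 1) :
    ∃ q : ℚ,
      (q : ℂ) = Complex.Gamma (1 + p / 2) * Complex.Gamma (1 - p / 2) /
          (Complex.Gamma (3 / 2) * Complex.Gamma (1 / 2)) ∧
      (q : ℚ_[p]) = (p : ℚ_[p]) / 2 *
          (((moritaGamma p (1 + (p : ℤ_[p]) * t) * moritaGamma p (1 - (p : ℤ_[p]) * t) : ℤ_[p]) : ℚ_[p]) /
            ((moritaGamma p (1 + t) * moritaGamma p t : ℤ_[p]) : ℚ_[p])) := by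
  obtain ⟨m, hm⟩ := hp
  refine ⟨(-1) ^ m * p, ?_, ?_⟩
  · have hpm : (p : ℂ) = 2 * m + 1 := by exact_mod_cast hm
    push_cast
    rw [hpm, Complex.Gamma_one_add_odd_div_two_mul_Gamma_one_sub_div]
  · have hΓ (x : ℤ_[p]) : (moritaGamma p x : ℚ_[p]) ≠ 0 := by
      rw [PadicInt.coe_ne_zero, ← norm_ne_zero_iff, norm_moritaGamma (by omega)]
      exact one_ne_zero
    have ht' : (t : ℚ_[p]) = 1 / 2 := by
      have := congrArg PadicInt.Coe.ringHom ht
      rw [map_mul, map_ofNat, map_one] at this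
      change 2 * (t : ℚ_[p]) = 1 at this
      linear_combination this / 2
    have hN := congrArg ((↑) : ℤ_[p] → ℚ_[p])
      (moritaGamma_one_add_mul_one_sub_of_two_mul_eq_one hm ht)
    push_cast at hN ⊢
    rw [ht'] at hN
    field_simp [hΓ (1 + t), hΓ t]
    linear_combination (-2 * (p : ℚ_[p])) * hN
end

section
/- For a prime p ≡ 3 (mod 4), Γ_p((p+1)/4) · Γ_p((1-p)/4) ≡ Γ_p(1/4)^2 (mod p^2), where Γ_p is the p-adic Gamma function. -/
/-!
Modulo `p ^ k` the partial products `(-1) ^ n ∏_{k < n, p ∤ k} k` depend only on `n` modulo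
`p ^ k`, by Wilson's theorem for `(ZMod (p ^ k))ˣ`, whose only square roots of `1` are `±1`
when `p` is odd. Hence `Γ_p(x)` is congruent modulo `p ^ k` to the partial product at any
natural number `N ≡ x`.

Modulo `p ^ 2`, a block of `p` consecutive factors is unchanged by a shift by `p`: since
`p ^ 2 = 0` there, `∏ (a_j + p) = ∏ a_j * (1 + p ∑ a_j⁻¹)`, and the inverses of the nonzero
residues modulo an odd prime sum to `0`. So `t ↦ Γ_p(d + p t)` is a geometric progression modulo
`p ^ 2`, which gives `Γ_p(x + p y) Γ_p(x - p y) ≡ Γ_p(x) ^ 2`; take `x = y = u`.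
-/

open Finset

theorem Finset.prod_univ_eq_of_mul_self_eq_one {G : Type*} [CommGroup G] [Fintype G] {ε : G}
    (hε : ε * ε = 1) (h : ∀ g : G, g * g = 1 → g = 1 ∨ g = ε) : ∏ g : G, g = ε := by
  classical
  have hrest : ∏ g ∈ univ.erase ε, g = 1 :=
    prod_involution (fun g _ => g⁻¹) (fun g _ => mul_inv_cancel g)
      (fun g hg hg1 hinv => by
        rcases h g (by simpa [hinv] using mul_inv_cancel g) with rfl | rfl
        · exact hg1 rfl
        · exact (mem_erase.mp hg).1 rfl)
      (fun g hg => by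
        simp only [mem_erase, mem_univ, and_true, ne_eq, inv_eq_iff_eq_inv] at hg ⊢
        rwa [← eq_inv_of_mul_eq_one_right hε])
      (fun g _ => inv_inv g)
  rw [← mul_prod_erase univ (fun g => g) (mem_univ ε), hrest, mul_one]

theorem Finset.prod_ite_isUnit {M : Type*} [CommMonoid M] [Fintype M] [Fintype Mˣ]
    [DecidablePred (IsUnit : M → Prop)] :
    ∏ x : M, (if IsUnit x then x else 1) = ∏ u : Mˣ, (u : M) := by
  have hunits :
      univ.filter IsUnit = univ.map ⟨(Units.val : Mˣ → M), Units.val_injective⟩ := by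
    ext x
    simp [IsUnit, eq_comm]
  rw [← prod_filter, hunits, prod_map]
  rfl

theorem Finset.prod_add_of_mul_self_eq_zero {R ι : Type*} [CommRing R] {x : R} (hx : x * x = 0)
    (s : Finset ι) {a b : ι → R} (hab : ∀ i ∈ s, a i * b i = 1) :
    ∏ i ∈ s, (a i + x) = (∏ i ∈ s, a i) * (1 + x * ∑ i ∈ s, b i) := by
  induction s using Finset.cons_induction with
  | empty => simp
  | cons i s hi ih =>
    rw [prod_cons, prod_cons, sum_cons, ih fun j hj => hab j (mem_cons_of_mem hj)]
    linear_combination (-x * ∏ j ∈ s, a j) * hab i (mem_cons_self i s) +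
      ((∏ j ∈ s, a j) * ∑ j ∈ s, b j) * hx

theorem Function.Periodic.eq_of_modEq {α : Type*} {f : ℕ → α} {N : ℕ}
    (h : Function.Periodic f N) {a b : ℕ} (hab : a ≡ b [MOD N]) : f a = f b := by
  have hmod : ∀ a, f a = f (a % N) := fun a => by
    conv_lhs => rw [← Nat.mod_add_div' a N]
    exact h.nat_mul _ _
  rw [hmod a, hmod b, hab]

theorem IsLocalRing.eq_one_or_eq_neg_one_of_mul_self_eq_one {R : Type*} [CommRing R]
    [IsLocalRing R] (h2 : IsUnit (2 : R)) {x : R} (hx : x * x = 1) : x = 1 ∨ x = -1 := by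
  have hzero : (x + 1) * (1 - x) = 0 := by linear_combination -hx
  rcases isUnit_or_isUnit_of_isUnit_add (a := x + 1) (b := 1 - x) (by ring_nf; exact h2)
    with hu | hu
  · left; linear_combination -hu.mul_right_eq_zero.mp hzero
  · right; linear_combination hu.mul_left_eq_zero.mp hzero

namespace ZMod

@[to_additive]
theorem prod_range_natCast {M : Type*} [CommMonoid M] (N : ℕ) [NeZero N] (f : ZMod N → M) :
    ∏ j ∈ range N, f j = ∏ x : ZMod N, f x :=
  prod_nbij' (fun j => (j : ZMod N)) val (fun _ _ => mem_univ _)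
    (fun x _ => mem_range.mpr (val_lt x)) (fun _ hj => val_cast_of_lt (mem_range.mp hj))
    (fun x _ => natCast_zmod_val x) (fun _ _ => rfl)

variable {p : ℕ} [hp : Fact p.Prime]

theorem isLocalRing_prime_pow {m : ℕ} (hm : m ≠ 0) : IsLocalRing (ZMod (p ^ m)) :=
  haveI : Fact (1 < p ^ m) := ⟨Nat.one_lt_pow hm hp.out.one_lt⟩
  IsLocalRing.of_surjective' (PadicInt.toZModPow m) (ringHom_surjective _)

theorem prod_units_prime_pow (hp2 : p ≠ 2) {m : ℕ} (hm : m ≠ 0) :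
    ∏ u : (ZMod (p ^ m))ˣ, u = -1 := by
  have := isLocalRing_prime_pow (p := p) hm
  have h2 : IsUnit (2 : ZMod (p ^ m)) := by
    have := (isUnit_natCast_iff_not_dvd_pow (a := 2) hp.out (Nat.pos_of_ne_zero hm)).mpr
      fun h => hp2 ((Nat.prime_dvd_prime_iff_eq hp.out Nat.prime_two).mp h)
    exact_mod_cast this
  refine prod_univ_eq_of_mul_self_eq_one (by simp) fun u hu => ?_
  refine (IsLocalRing.eq_one_or_eq_neg_one_of_mul_self_eq_one h2
    (congrArg Units.val hu)).imp (fun h => Units.ext h) (fun h => Units.ext ?_)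
  rw [h, Units.val_neg, Units.val_one]

theorem sum_inv_natCast_add_range (hp2 : p ≠ 2) (d : ℕ) :
    ∑ j ∈ range p, ((d + j : ℕ) : ZMod p)⁻¹ = 0 := by
  have hcard : 1 < Fintype.card (ZMod p) - 1 := by
    have := hp.out.two_le
    rw [card]; omega
  push_cast
  rw [sum_range_natCast p fun x => ((d : ZMod p) + x)⁻¹,
    Fintype.sum_equiv (Equiv.addLeft (d : ZMod p)) (fun x => ((d : ZMod p) + x)⁻¹)
      (fun x => x⁻¹) fun _ => rfl,
    Fintype.sum_equiv (Equiv.inv (ZMod p)) (fun x => x⁻¹) (fun x => x) fun _ => rfl]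
  simpa using FiniteField.sum_pow_lt_card_sub_one (ZMod p) 1 hcard

theorem natCast_self_mul_eq_zero {y : ZMod (p ^ 2)}
    (hy : castHom (dvd_pow_self p two_ne_zero) (ZMod p) y = 0) :
    (p : ZMod (p ^ 2)) * y = 0 := by
  rw [← natCast_zmod_val y, map_natCast, natCast_eq_zero_iff] at hy
  obtain ⟨c, hc⟩ := hy
  rw [← natCast_zmod_val y, hc, ← Nat.cast_mul, ← mul_assoc, ← sq, Nat.cast_mul, natCast_self,
    zero_mul]

theorem natCast_self_mul_sum_inv_natCast_add_range (hp2 : p ≠ 2) (d : ℕ) :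
    (p : ZMod (p ^ 2)) *
      ∑ j ∈ (range p).filter (fun j => ¬ p ∣ d + j), ((d + j : ℕ) : ZMod (p ^ 2))⁻¹ = 0 := by
  set π := castHom (dvd_pow_self p two_ne_zero) (ZMod p)
  have hinv : ∀ j ∈ (range p).filter (fun j => ¬ p ∣ d + j),
      π ((d + j : ℕ) : ZMod (p ^ 2))⁻¹ = ((d + j : ℕ) : ZMod p)⁻¹ := fun j hj => by
    have hunit := (isUnit_natCast_iff_not_dvd_pow hp.out two_pos).mpr (mem_filter.mp hj).2
    rw [← map_natCast π]
    exact eq_inv_of_mul_eq_one_right (by rw [← map_mul, mul_inv_of_unit _ hunit, map_one])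
  refine natCast_self_mul_eq_zero ?_
  rw [map_sum, sum_congr rfl hinv, sum_filter_of_ne, sum_inv_natCast_add_range hp2 d]
  intro j _ hj hdvd
  exact hj (by rw [(natCast_eq_zero_iff _ _).mpr hdvd, inv_zero])

end ZMod

section MoritaProd

variable (R : Type*) [CommRing R] (p : ℕ)

def moritaFactor (k : ℕ) : R := if ¬ p ∣ k then (k : R) else 1

def moritaProd (n : ℕ) : R := (-1) ^ n * ∏ k ∈ (range n).filter (fun k => ¬ p ∣ k), (k : R)

theorem moritaProd_add (n L : ℕ) :
    moritaProd R p (n + L) =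
      moritaProd R p n * ((-1) ^ L * ∏ j ∈ range L, moritaFactor R p (n + j)) := by
  have hfilter : ∀ m, ∏ k ∈ (range m).filter (fun k => ¬ p ∣ k), (k : R) =
      ∏ k ∈ range m, moritaFactor R p k := fun m => prod_filter _ _
  rw [moritaProd, moritaProd, hfilter, hfilter, prod_range_add, pow_add]
  ring

theorem map_moritaProd {S : Type*} [CommRing S] (f : R →+* S) (n : ℕ) :
    f (moritaProd R p n) = moritaProd S p n := by
  simp [moritaProd, map_prod]

variable {p} [hp : Fact p.Prime]

theorem prod_moritaFactor_prime_pow (hp2 : p ≠ 2) {m : ℕ} (hm : m ≠ 0) (n : ℕ) :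
    ∏ j ∈ range (p ^ m), moritaFactor (ZMod (p ^ m)) p (n + j) = -1 := by
  have hfactor : ∀ k : ℕ, moritaFactor (ZMod (p ^ m)) p k =
      if IsUnit (k : ZMod (p ^ m)) then (k : ZMod (p ^ m)) else 1 := fun k => by
    simp only [moritaFactor, ZMod.isUnit_natCast_iff_not_dvd_pow hp.out (Nat.pos_of_ne_zero hm)]
  simp only [hfactor, Nat.cast_add]
  set g : ZMod (p ^ m) → ZMod (p ^ m) := fun x => if IsUnit x then x else 1
  rw [ZMod.prod_range_natCast (p ^ m) fun x => g (n + x),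
    Fintype.prod_equiv (Equiv.addLeft (n : ZMod (p ^ m))) (fun x => g (n + x)) g fun _ => rfl,
    prod_ite_isUnit, ← Units.coe_prod, ZMod.prod_units_prime_pow hp2 hm, Units.val_neg,
    Units.val_one]

theorem moritaProd_periodic (hp2 : p ≠ 2) (m : ℕ) :
    Function.Periodic (moritaProd (ZMod (p ^ m)) p) (p ^ m) := by
  intro n
  rcases eq_or_ne m 0 with rfl | hm
  · exact (ZMod.subsingleton_iff.mpr (pow_zero p)).elim _ _
  rw [moritaProd_add, prod_moritaFactor_prime_pow hp2 hm,
    (hp.out.odd_of_ne_two hp2).pow.neg_one_pow]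
  ring

theorem periodic_prod_moritaFactor (hp2 : p ≠ 2) :
    Function.Periodic (fun d => ∏ j ∈ range p, moritaFactor (ZMod (p ^ 2)) p (d + j)) p := by
  intro d
  show ∏ j ∈ range p, moritaFactor (ZMod (p ^ 2)) p (d + p + j) =
    ∏ j ∈ range p, moritaFactor (ZMod (p ^ 2)) p (d + j)
  set S := (range p).filter fun j => ¬ p ∣ d + j
  set a : ℕ → ZMod (p ^ 2) := fun j => ((d + j : ℕ) : ZMod (p ^ 2))
  have hunit : ∀ j ∈ S, IsUnit (a j) := fun j hj =>
    (ZMod.isUnit_natCast_iff_not_dvd_pow hp.out two_pos).mpr (mem_filter.mp hj).2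
  have hshifted : ∏ j ∈ range p, moritaFactor (ZMod (p ^ 2)) p (d + p + j) =
      ∏ j ∈ S, (a j + p) := by
    rw [prod_filter]
    refine prod_congr rfl fun j _ => ?_
    simp only [moritaFactor, show d + p + j = d + j + p by ring, Nat.dvd_add_self_right]
    rw [Nat.cast_add (d + j) p]
  have hp_sq : (p : ZMod (p ^ 2)) * p = 0 := by
    rw [← sq, ← Nat.cast_pow, ZMod.natCast_self]
  have hunshifted : ∏ j ∈ range p, moritaFactor (ZMod (p ^ 2)) p (d + j) = ∏ j ∈ S, a j :=
    (prod_filter _ _).symm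
  rw [hshifted, hunshifted,
    prod_add_of_mul_self_eq_zero hp_sq S fun j hj => ZMod.mul_inv_of_unit _ (hunit j hj),
    ZMod.natCast_self_mul_sum_inv_natCast_add_range hp2 d, add_zero, mul_one]

theorem moritaProd_add_mul_prime (hp2 : p ≠ 2) (d t : ℕ) :
    moritaProd (ZMod (p ^ 2)) p (d + p * t) =
      moritaProd (ZMod (p ^ 2)) p d *
        (-∏ j ∈ range p, moritaFactor (ZMod (p ^ 2)) p (d + j)) ^ t := by
  induction t with
  | zero => simp
  | succ t ih =>
    have hblock := (periodic_prod_moritaFactor hp2).nat_mul t d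
    simp only [Nat.cast_id] at hblock
    rw [mul_add_one, ← add_assoc, moritaProd_add, ih, mul_comm p t, hblock,
      (hp.out.odd_of_ne_two hp2).neg_one_pow]
    ring

theorem moritaProd_mul_moritaProd_add_mul_prime (hp2 : p ≠ 2) (d t : ℕ) :
    moritaProd (ZMod (p ^ 2)) p d * moritaProd (ZMod (p ^ 2)) p (d + p * (2 * t)) =
      moritaProd (ZMod (p ^ 2)) p (d + p * t) ^ 2 := by
  rw [moritaProd_add_mul_prime hp2 d, moritaProd_add_mul_prime hp2 d t]
  ring

end MoritaProd

namespace PadicInt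

variable {p : ℕ} [hp : Fact p.Prime]

theorem toZModPow_eq_iff_dist_le {a b : ℤ_[p]} {k : ℕ} :
    toZModPow k a = toZModPow k b ↔ dist a b ≤ (p : ℝ) ^ (-(k : ℤ)) := by
  rw [dist_eq_norm, norm_le_pow_iff_mem_span_pow, ← ker_toZModPow, RingHom.mem_ker, map_sub,
    sub_eq_zero]

theorem toZModPow_limUnder {s : ℕ → ℤ_[p]}
    (hs : ∀ k n, k ≤ n → toZModPow k (s n) = toZModPow k (s k)) (k : ℕ) :
    toZModPow k (Filter.limUnder Filter.atTop s) = toZModPow k (s k) := by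
  have hball : ∀ k n, k ≤ n → s n ∈ Metric.closedBall (s k) ((p : ℝ) ^ (-(k : ℤ))) :=
    fun k n hkn => toZModPow_eq_iff_dist_le.mp (hs k n hkn)
  have hcauchy : CauchySeq s := by
    refine Metric.cauchySeq_iff'.mpr fun ε hε => ?_
    obtain ⟨j, hj⟩ := exists_pow_neg_lt p hε
    exact ⟨j, fun n hn => (hball j n hn).trans_lt hj⟩
  obtain ⟨L, hL⟩ := cauchySeq_tendsto_of_complete hcauchy
  rw [hL.limUnder_eq]
  exact toZModPow_eq_iff_dist_le.mpr <| Metric.isClosed_closedBall.mem_of_tendsto hL <|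
    Filter.eventually_atTop.mpr ⟨k, hball k⟩

end PadicInt

section MoritaGamma

open PadicInt

variable {p : ℕ} [hp : Fact p.Prime]

theorem toZModPow_moritaGamma (hp2 : p ≠ 2) (x : ℤ_[p]) (k : ℕ) {N : ℕ}
    (hN : (N : ZMod (p ^ k)) = toZModPow k x) :
    toZModPow k (moritaGamma p x) = moritaProd (ZMod (p ^ k)) p N := by
  have hs : ∀ j n, j ≤ n →
      toZModPow j (moritaProd ℤ_[p] p (x.appr n)) = moritaProd (ZMod (p ^ j)) p (x.appr j) :=
    fun j n hjn => by
      rw [map_moritaProd]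
      exact (moritaProd_periodic hp2 j).eq_of_modEq
        ((Nat.modEq_iff_dvd' (appr_mono x hjn)).mpr (dvd_appr_sub_appr x j n hjn)).symm
  change toZModPow k (Filter.limUnder Filter.atTop fun n => moritaProd ℤ_[p] p (x.appr n)) = _
  rw [toZModPow_limUnder (fun j n hjn => (hs j n hjn).trans (hs j j le_rfl).symm), hs k k le_rfl]
  exact (moritaProd_periodic hp2 k).eq_of_modEq ((ZMod.natCast_eq_natCast_iff _ _ _).mp hN.symm)

theorem moritaGamma_add_mul_mul_sub_mul_smodEq_sq (hp2 : p ≠ 2) (x y : ℤ_[p]) :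
    moritaGamma p (x + p * y) * moritaGamma p (x - p * y) ≡ moritaGamma p x ^ 2
      [SMOD Ideal.span {(p : ℤ_[p]) ^ 2}] := by
  set φ := toZModPow (p := p) 2
  have hd : ((φ (x - p * y)).val : ZMod (p ^ 2)) = φ (x - p * y) := ZMod.natCast_zmod_val _
  have he : ((φ y).val : ZMod (p ^ 2)) = φ y := ZMod.natCast_zmod_val _
  have hx : (((φ (x - p * y)).val + p * (φ y).val : ℕ) : ZMod (p ^ 2)) = φ x := by
    push_cast
    rw [hd, he, map_sub, map_mul, map_natCast]
    ring
  have hxy :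
      (((φ (x - p * y)).val + p * (2 * (φ y).val) : ℕ) : ZMod (p ^ 2)) = φ (x + p * y) := by
    push_cast
    rw [hd, he, map_sub, map_add, map_mul, map_natCast]
    ring
  rw [SModEq.sub_mem, ← ker_toZModPow, RingHom.mem_ker, map_sub, map_mul, map_pow,
    toZModPow_moritaGamma hp2 _ 2 hxy, toZModPow_moritaGamma hp2 _ 2 hd,
    toZModPow_moritaGamma hp2 _ 2 hx, mul_comm, moritaProd_mul_moritaProd_add_mul_prime hp2,
    sub_self]

end MoritaGamma

theorem padicGamma_quarter_shift_general (p : ℕ) [Fact p.Prime] (hp4 : p % 4 = 3)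
    (u : ℤ_[p]) :
    ∃ c : ℤ_[p],
      moritaGamma p ((1 + (p : ℤ_[p])) * u) * moritaGamma p ((1 - (p : ℤ_[p])) * u)
        - (moritaGamma p u) ^ 2 = (p : ℤ_[p]) ^ 2 * c := by
  have hp2 : p ≠ 2 := by omega
  rw [add_mul, sub_mul, one_mul]
  exact Ideal.mem_span_singleton.mp
    (SModEq.sub_mem.mp (moritaGamma_add_mul_mul_sub_mul_smodEq_sq hp2 u u))

/-- For a prime `p ≡ 3 (mod 4)`,
`Γ_p((p+1)/4)·Γ_p((1-p)/4) ≡ Γ_p(1/4)^2 (mod p²)`.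
Here `u ∈ ℤ_p` is the element `1/4`, so `(p+1)/4 = (p+1)·u` and
`(1-p)/4 = (1-p)·u`. -/
theorem padicGamma_quarter_shift (p : ℕ) [Fact p.Prime] (hp4 : p % 4 = 3)
    (u : ℤ_[p]) (hu : 4 * u = 1) :
    ∃ c : ℤ_[p],
      moritaGamma p ((1 + (p : ℤ_[p])) * u) * moritaGamma p ((1 - (p : ℤ_[p])) * u)
        - (moritaGamma p u) ^ 2 = (p : ℤ_[p]) ^ 2 * c :=
  padicGamma_quarter_shift_general p hp4 u
end
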